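/- arXiv:1006.4928 — 2 statements merged into one kernel-verified Lean document; each statement's English description precedes it below -/
import Mathlib

section
/- Consider the splitting automaton on Z^d with d ≥ 1, background 1 − 1/(2d) ≤ h < 1 and initial mass n ≥ 1. Then for every integer t ≥ 1, the set of sites that split at least once up to time t is exactly the lattice diamond of radius t − 1: T_t = {x ∈ Z^d : Σ_i |x_i| ≤ t − 1}; consequently T_t ∪ ∂T_t = {x ∈ Z^d : Σ_i |x_i| ≤ t}. -/
/-!
Under the parallel order the configuration at time `t` is explicit: sites at `ℓ¹` distance `> t`
from the origin still carry the background `h`, while inside the diamond of radius `t` the sites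
whose distance has the parity of `t` carry mass `≥ 1` and the others are empty. This propagates by
induction: exactly the sites of parity `t` split; a boundary site of distance `t + 1` then
receives at least `1/(2d) ≥ 1 - h` from an inward neighbour, an interior site of the other parity
receives at least `1` from its `2d` neighbours, and `h < 1` keeps everything farther out stable.
So the sites split by time `t` are those at distance `≤ t - 1`.
-/

open scoped BigOperators

/-- The nearest neighbor of `x ∈ ℤ^d` obtained by shifting coordinate `i` by `ε`. -/
def nbr {d : ℕ} (x : Fin d → ℤ) (i : Fin d) (ε : ℤ) : Fin d → ℤ :=
  Function.update x i (x i + ε)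

/-- Nearest-neighbor adjacency in `ℤ^d`. -/
def Adj {d : ℕ} (x y : Fin d → ℤ) : Prop :=
  (∑ i, |x i - y i|) = 1

/-- The splitting model on `ℤ^d` with initial mass `n` at the origin and background
mass `h` at every other site, together with a splitting order: `S (t+1)` is the set
of sites that split at time `t+1` (a subset of the sites unstable at time `t`,
i.e. those of mass `≥ 1`), and the mass `η` evolves by Zhang's toppling rule:
a splitting site loses all its mass, distributing a fraction `1/(2d)` of it to
each of its `2d` nearest neighbors. -/
structure SplittingModel (d : ℕ) (n h : ℝ) where
  η : ℕ → (Fin d → ℤ) → ℝ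
  S : ℕ → Set (Fin d → ℤ)
  init_origin : η 0 0 = n
  init_other : ∀ x : Fin d → ℤ, x ≠ 0 → η 0 x = h
  S_zero : S 0 = ∅
  S_subset : ∀ t, S (t + 1) ⊆ {x | 1 ≤ η t x}
  evolve : ∀ t x, η (t + 1) x =
      (S (t + 1))ᶜ.indicator (η t) x
        + (1 / (2 * (d : ℝ))) * ∑ i : Fin d,
            ((S (t + 1)).indicator (η t) (nbr x i 1)
              + (S (t + 1)).indicator (η t) (nbr x i (-1)))

namespace SplittingModel

variable {d : ℕ} {n h : ℝ}

/-- A valid splitting order: some unstable site splits whenever there is an unstable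
site, and every site that is unstable at some time eventually splits. -/
def Valid (M : SplittingModel d n h) : Prop :=
  (∀ t, {x | 1 ≤ M.η t x}.Nonempty → (M.S (t + 1)).Nonempty) ∧
    (∀ t x, 1 ≤ M.η t x → ∃ t₀, 1 ≤ t₀ ∧ x ∈ M.S (t + t₀))

/-- The parallel splitting order (the splitting automaton): at every time step,
every unstable site splits. -/
def Parallel (M : SplittingModel d n h) : Prop :=
  ∀ t, M.S (t + 1) = {x | 1 ≤ M.η t x}

/-- The set of sites that split at least once up to (and including) time `t`. -/
def Tt (M : SplittingModel d n h) (t : ℕ) : Set (Fin d → ℤ) :=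
  ⋃ t' ∈ Set.Icc 1 t, M.S t'

/-- The set of sites that split at least once. -/
def T (M : SplittingModel d n h) : Set (Fin d → ℤ) :=
  ⋃ t, M.S t

/-- The model stabilizes: every site splits only finitely many times. -/
def Stabilizes (M : SplittingModel d n h) : Prop :=
  ∀ x, {t | x ∈ M.S t}.Finite

/-- The total mass `u x` emitted from the site `x` during stabilization. -/
noncomputable def emit (M : SplittingModel d n h) (x : Fin d → ℤ) : ℝ :=
  ∑' t : ℕ, (M.S (t + 1)).indicator (M.η t) x

end SplittingModel

/-- The (outer lattice) boundary of `X ⊆ ℤ^d`: the sites not in `X` having a nearest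
neighbor in `X`. -/
def latticeBdry {d : ℕ} (X : Set (Fin d → ℤ)) : Set (Fin d → ℤ) :=
  {x | x ∉ X ∧ ∃ y ∈ X, Adj x y}

section Lattice

variable {d : ℕ}

def l1Norm (x : Fin d → ℤ) : ℤ := ∑ i, |x i|

lemma l1Norm_nonneg (x : Fin d → ℤ) : 0 ≤ l1Norm x :=
  Finset.sum_nonneg fun _ _ => abs_nonneg _

lemma l1Norm_eq_zero_iff {x : Fin d → ℤ} : l1Norm x = 0 ↔ x = 0 := by
  simp only [l1Norm, Finset.sum_eq_zero_iff_of_nonneg fun i _ => abs_nonneg (x i),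
    Finset.mem_univ, abs_eq_zero, true_implies, funext_iff, Pi.zero_apply]

lemma l1Norm_nbr (x : Fin d → ℤ) (i : Fin d) (ε : ℤ) :
    l1Norm (nbr x i ε) = l1Norm x - |x i| + |x i + ε| := by
  have hsplit :=
    Finset.sum_eq_add_sum_sdiff_singleton_of_mem (Finset.mem_univ i) fun j => |x j|
  simp only [l1Norm, nbr, Function.apply_update (fun _ => abs) x,
    Finset.sum_update_of_mem (Finset.mem_univ i)] at hsplit ⊢
  linarith

lemma l1Norm_nbr_eq_add_one_or_sub_one (x : Fin d → ℤ) (i : Fin d) {ε : ℤ}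
    (hε : ε = 1 ∨ ε = -1) :
    l1Norm (nbr x i ε) = l1Norm x + 1 ∨ l1Norm (nbr x i ε) = l1Norm x - 1 := by
  rw [l1Norm_nbr]
  rcases hε with rfl | rfl
  · cases abs_cases (x i) <;> cases abs_cases (x i + 1) <;> omega
  · cases abs_cases (x i) <;> cases abs_cases (x i + -1) <;> omega

lemma exists_nbr_l1Norm_eq_sub_one {x : Fin d → ℤ} (hx : x ≠ 0) :
    ∃ i ε, (ε = 1 ∨ ε = -1) ∧ l1Norm (nbr x i ε) = l1Norm x - 1 := by
  obtain ⟨i, hi⟩ : ∃ i, x i ≠ 0 := Function.ne_iff.mp hx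
  rcases lt_or_gt_of_ne hi with h | h
  · refine ⟨i, 1, Or.inl rfl, ?_⟩
    rw [l1Norm_nbr, abs_of_neg h, abs_of_nonpos (by omega)]
    ring
  · refine ⟨i, -1, Or.inr rfl, ?_⟩
    rw [l1Norm_nbr, abs_of_pos h, abs_of_nonneg (by omega)]
    ring

lemma adj_nbr (x : Fin d → ℤ) (i : Fin d) {ε : ℤ} (hε : ε = 1 ∨ ε = -1) :
    Adj x (nbr x i ε) := by
  have hsum : ∑ j, |x j - nbr x i ε j| = ∑ j, Function.update (0 : Fin d → ℤ) i 1 j := by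
    congr 1; funext j
    rcases eq_or_ne j i with rfl | hj
    · rcases hε with rfl | rfl <;> simp [nbr]
    · simp [nbr, Function.update_of_ne hj]
  rw [Adj, hsum, Finset.sum_update_of_mem (Finset.mem_univ i)]
  simp

lemma l1Norm_le_of_adj {x y : Fin d → ℤ} (hxy : Adj x y) : l1Norm x ≤ l1Norm y + 1 := by
  rw [← hxy, l1Norm, l1Norm, ← Finset.sum_add_distrib]
  exact Finset.sum_le_sum fun j _ => by
    linarith [abs_sub_abs_le_abs_sub (x j) (y j)]

lemma diamond_union_latticeBdry {r : ℤ} (hr : 0 ≤ r) :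
    {x | l1Norm x ≤ r} ∪ latticeBdry {x | l1Norm x ≤ r} =
      {x : Fin d → ℤ | l1Norm x ≤ r + 1} := by
  ext x
  simp only [latticeBdry, Set.mem_union, Set.mem_ofPred_eq, not_le]
  constructor
  · rintro (hx | ⟨-, y, hy, hxy⟩)
    · omega
    · linarith [l1Norm_le_of_adj hxy]
  · intro hx
    rcases le_or_gt (l1Norm x) r with hle | hgt
    · exact Or.inl hle
    · have hx0 : x ≠ 0 := fun h0 => by
        rw [h0, l1Norm_eq_zero_iff.mpr rfl] at hgt; omega
      obtain ⟨i, ε, hε, hdown⟩ := exists_nbr_l1Norm_eq_sub_one hx0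
      exact Or.inr ⟨hgt, nbr x i ε, by omega, adj_nbr x i hε⟩

end Lattice

def parityDiamond (d t : ℕ) : Set (Fin d → ℤ) :=
  {x | l1Norm x ≤ t ∧ l1Norm x % 2 = t % 2}

namespace SplittingModel

variable {d : ℕ} {n h : ℝ} (M : SplittingModel d n h)

noncomputable def inflow (t : ℕ) (x : Fin d → ℤ) : ℝ :=
  ∑ i : Fin d, ((M.S (t + 1)).indicator (M.η t) (nbr x i 1)
    + (M.S (t + 1)).indicator (M.η t) (nbr x i (-1)))

lemma eta_succ_of_mem {t : ℕ} {x : Fin d → ℤ} (hx : x ∈ M.S (t + 1)) :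
    M.η (t + 1) x = 1 / (2 * d) * M.inflow t x := by
  rw [M.evolve, Set.indicator_of_notMem (Set.notMem_compl_iff.mpr hx), zero_add, inflow]

lemma eta_succ_of_notMem {t : ℕ} {x : Fin d → ℤ} (hx : x ∉ M.S (t + 1)) :
    M.η (t + 1) x = M.η t x + 1 / (2 * d) * M.inflow t x := by
  rw [M.evolve, Set.indicator_of_mem (Set.mem_compl hx), inflow]

lemma indicator_splitting_nonneg (t : ℕ) (y : Fin d → ℤ) :
    0 ≤ (M.S (t + 1)).indicator (M.η t) y :=
  Set.indicator_nonneg (fun _ hz => zero_le_one.trans (M.S_subset t hz)) y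

lemma one_le_indicator_splitting {t : ℕ} {y : Fin d → ℤ} (hy : y ∈ M.S (t + 1)) :
    1 ≤ (M.S (t + 1)).indicator (M.η t) y := by
  rw [Set.indicator_of_mem hy]
  exact M.S_subset t hy

lemma inflow_eq_zero {t : ℕ} {x : Fin d → ℤ}
    (hx : ∀ i ε, (ε = 1 ∨ ε = -1) → nbr x i ε ∉ M.S (t + 1)) : M.inflow t x = 0 :=
  Finset.sum_eq_zero fun i _ => by
    rw [Set.indicator_of_notMem (hx i 1 (Or.inl rfl)),
      Set.indicator_of_notMem (hx i (-1) (Or.inr rfl)), add_zero]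

lemma one_le_inflow {t : ℕ} {x : Fin d → ℤ} {i : Fin d} {ε : ℤ} (hε : ε = 1 ∨ ε = -1)
    (hy : nbr x i ε ∈ M.S (t + 1)) : 1 ≤ M.inflow t x := by
  have hpair : 1 ≤ (M.S (t + 1)).indicator (M.η t) (nbr x i 1)
      + (M.S (t + 1)).indicator (M.η t) (nbr x i (-1)) := by
    rcases hε with rfl | rfl
    · linarith [M.one_le_indicator_splitting hy, M.indicator_splitting_nonneg t (nbr x i (-1))]
    · linarith [M.one_le_indicator_splitting hy, M.indicator_splitting_nonneg t (nbr x i 1)]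
  exact hpair.trans <| Finset.single_le_sum
    (f := fun j => (M.S (t + 1)).indicator (M.η t) (nbr x j 1)
      + (M.S (t + 1)).indicator (M.η t) (nbr x j (-1)))
    (fun j _ => add_nonneg (M.indicator_splitting_nonneg t _) (M.indicator_splitting_nonneg t _))
    (Finset.mem_univ i)

lemma two_mul_le_inflow {t : ℕ} {x : Fin d → ℤ}
    (hx : ∀ i ε, (ε = 1 ∨ ε = -1) → nbr x i ε ∈ M.S (t + 1)) :
    2 * (d : ℝ) ≤ M.inflow t x :=
  calc 2 * (d : ℝ) = ∑ _i : Fin d, (1 + 1 : ℝ) := by simp; ring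
    _ ≤ M.inflow t x := Finset.sum_le_sum fun i _ =>
      add_le_add (M.one_le_indicator_splitting (hx i 1 (Or.inl rfl)))
        (M.one_le_indicator_splitting (hx i (-1) (Or.inr rfl)))

structure IsDiamondProfile (t : ℕ) : Prop where
  one_le : ∀ x ∈ parityDiamond d t, 1 ≤ M.η t x
  eq_zero : ∀ x, l1Norm x ≤ t → x ∉ parityDiamond d t → M.η t x = 0
  eq_background : ∀ x, (t : ℤ) < l1Norm x → M.η t x = h

lemma isDiamondProfile_zero (hn : 1 ≤ n) : M.IsDiamondProfile 0 where
  one_le x hx := by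
    obtain rfl : x = 0 :=
      l1Norm_eq_zero_iff.mp (le_antisymm (by exact_mod_cast hx.1) (l1Norm_nonneg x))
    rw [M.init_origin]
    exact hn
  eq_zero x hx hx' := absurd ⟨hx, by have := l1Norm_nonneg x; omega⟩ hx'
  eq_background x hx := M.init_other x <| by
    rintro rfl
    rw [l1Norm_eq_zero_iff.mpr rfl] at hx
    omega

variable {M}

lemma IsDiamondProfile.splitting_eq (hM : M.Parallel) (hh2 : h < 1) {t : ℕ}
    (hP : M.IsDiamondProfile t) : M.S (t + 1) = parityDiamond d t := by
  rw [hM t]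
  ext x
  refine ⟨fun hx => ?_, hP.one_le x⟩
  by_contra hx'
  rcases le_or_gt (l1Norm x) t with hle | hgt
  · linarith [hP.eq_zero x hle hx', show (1 : ℝ) ≤ M.η t x from hx]
  · linarith [hP.eq_background x hgt, show (1 : ℝ) ≤ M.η t x from hx]

lemma IsDiamondProfile.eta_succ_eq_background {t : ℕ} (hP : M.IsDiamondProfile t)
    (hS : M.S (t + 1) = parityDiamond d t) {x : Fin d → ℤ}
    (hx : ((t + 1 : ℕ) : ℤ) < l1Norm x) :
    M.η (t + 1) x = h := by
  have hxS : x ∉ M.S (t + 1) := by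
    rw [hS]; exact fun hc => by have := hc.1; omega
  rw [M.eta_succ_of_notMem hxS, hP.eq_background x (by omega), M.inflow_eq_zero, mul_zero,
    add_zero]
  intro i ε hε hc
  rw [hS] at hc
  rcases l1Norm_nbr_eq_add_one_or_sub_one x i hε with h' | h' <;> have := hc.1 <;> omega

lemma eta_succ_eq_zero {t : ℕ} (hS : M.S (t + 1) = parityDiamond d t)
    {x : Fin d → ℤ} (hx : l1Norm x ≤ ((t + 1 : ℕ) : ℤ))
    (hx' : x ∉ parityDiamond d (t + 1)) :
    M.η (t + 1) x = 0 := by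
  simp only [parityDiamond, Set.mem_ofPred_eq, not_and] at hx'
  have hxS : x ∈ M.S (t + 1) := by
    rw [hS]; exact ⟨by omega, by omega⟩
  rw [M.eta_succ_of_mem hxS, M.inflow_eq_zero, mul_zero]
  intro i ε hε hc
  rw [hS] at hc
  rcases l1Norm_nbr_eq_add_one_or_sub_one x i hε with h' | h' <;> have := hc.2 <;> omega

lemma IsDiamondProfile.one_le_eta_succ (hh1 : 1 - 1 / (2 * (d : ℝ)) ≤ h) (hh2 : h < 1) {t : ℕ}
    (hP : M.IsDiamondProfile t) (hS : M.S (t + 1) = parityDiamond d t)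
    {x : Fin d → ℤ} (hx : x ∈ parityDiamond d (t + 1)) : 1 ≤ M.η (t + 1) x := by
  have hd : (d : ℝ) ≠ 0 := by
    rintro hd
    rw [hd, mul_zero, div_zero, sub_zero] at hh1
    linarith
  have hc : 0 < 1 / (2 * (d : ℝ)) := by positivity
  obtain ⟨hxr, hxp⟩ := hx
  have hxS : x ∉ M.S (t + 1) := by
    rw [hS]; exact fun hmem => by have := hmem.2; omega
  rw [M.eta_succ_of_notMem hxS]
  rcases (by omega : l1Norm x = t + 1 ∨ l1Norm x ≤ t - 1) with hbd | hint
  · obtain ⟨i, ε, hε, hdown⟩ := exists_nbr_l1Norm_eq_sub_one (x := x) fun h0 => by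
      rw [h0, l1Norm_eq_zero_iff.mpr rfl] at hbd; omega
    have hin := M.one_le_inflow (x := x) (i := i) hε (by rw [hS]; exact ⟨by omega, by omega⟩)
    rw [hP.eq_background x (by omega)]
    calc 1 ≤ h + 1 / (2 * (d : ℝ)) * 1 := by linarith
      _ ≤ _ := by gcongr
  · have hin := M.two_mul_le_inflow (x := x) fun i ε hε => by
      rw [hS]
      rcases l1Norm_nbr_eq_add_one_or_sub_one x i hε with h' | h' <;>
        exact ⟨by omega, by omega⟩
    rw [hP.eq_zero x (by omega) fun hmem => by have := hmem.2; omega, zero_add]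
    calc 1 = 1 / (2 * (d : ℝ)) * (2 * d) := by field_simp
      _ ≤ _ := by gcongr

lemma IsDiamondProfile.succ (hM : M.Parallel) (hh1 : 1 - 1 / (2 * (d : ℝ)) ≤ h) (hh2 : h < 1)
    {t : ℕ} (hP : M.IsDiamondProfile t) : M.IsDiamondProfile (t + 1) :=
  have hS := hP.splitting_eq hM hh2
  ⟨fun _ hx => hP.one_le_eta_succ hh1 hh2 hS hx, fun _ hx hx' => eta_succ_eq_zero hS hx hx',
    fun _ hx => hP.eta_succ_eq_background hS hx⟩

lemma splitting_eq_parityDiamond (hM : M.Parallel) (hh1 : 1 - 1 / (2 * (d : ℝ)) ≤ h)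
    (hh2 : h < 1) (hn : 1 ≤ n) (t : ℕ) : M.S (t + 1) = parityDiamond d t := by
  refine IsDiamondProfile.splitting_eq hM hh2 ?_
  induction t with
  | zero => exact M.isDiamondProfile_zero hn
  | succ t ih => exact ih.succ hM hh1 hh2

lemma Tt_eq_of_splitting_eq (hS : ∀ t, M.S (t + 1) = parityDiamond d t) (t : ℕ) :
    M.Tt t = {x | l1Norm x ≤ (t : ℤ) - 1} := by
  ext x
  simp only [Tt, Set.mem_iUnion, Set.mem_Icc, exists_prop, Set.mem_ofPred_eq]
  constructor
  · rintro ⟨t', ⟨ht1, ht2⟩, hx⟩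
    obtain ⟨s, rfl⟩ := Nat.exists_eq_add_of_le' ht1
    rw [hS] at hx
    have := hx.1
    omega
  · intro hx
    have := l1Norm_nonneg x
    refine ⟨(l1Norm x).toNat + 1, ⟨by omega, by omega⟩, ?_⟩
    rw [hS]
    exact ⟨by omega, by omega⟩

end SplittingModel

theorem diamond_exact_general {d : ℕ} {n h : ℝ}
    (hh1 : 1 - 1 / (2 * (d : ℝ)) ≤ h) (hh2 : h < 1) (hn : 1 ≤ n)
    (M : SplittingModel d n h) (hM : M.Parallel) (t : ℕ) (ht : 1 ≤ t) :
    M.Tt t = {x : Fin d → ℤ | (∑ i, |x i|) ≤ (t : ℤ) - 1} ∧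
      M.Tt t ∪ latticeBdry (M.Tt t) = {x : Fin d → ℤ | (∑ i, |x i|) ≤ (t : ℤ)} := by
  have hT := M.Tt_eq_of_splitting_eq (M.splitting_eq_parityDiamond hM hh1 hh2 hn) t
  refine ⟨hT, ?_⟩
  rw [hT, diamond_union_latticeBdry (by omega), sub_add_cancel]
  rfl

/-- For the splitting automaton on `ℤ^d` with background `1 - 1/(2d) ≤ h < 1` and
initial mass `n ≥ 1`, for every `t ≥ 1` the set of sites that split at least once
up to time `t` is the lattice diamond of radius `t - 1`, and together with its
boundary it is the lattice diamond of radius `t`. -/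
theorem diamond_exact {d : ℕ} (hd : 1 ≤ d) {n h : ℝ}
    (hh1 : 1 - 1 / (2 * (d : ℝ)) ≤ h) (hh2 : h < 1) (hn : 1 ≤ n)
    (M : SplittingModel d n h) (hM : M.Parallel) (t : ℕ) (ht : 1 ≤ t) :
    M.Tt t = {x : Fin d → ℤ | (∑ i, |x i|) ≤ (t : ℤ) - 1} ∧
      M.Tt t ∪ latticeBdry (M.Tt t) = {x : Fin d → ℤ | (∑ i, |x i|) ≤ (t : ℤ)} :=
  diamond_exact_general hh1 hh2 hn M hM t ht
end

section
/- Consider the splitting model on Z^d (d ≥ 1) with any valid splitting order, h < 1, n ≥ 0, and suppose the model stabilizes. For k ≥ 1 let Q_k(x) = {y ∈ Z^d : max_i |x_i − y_i| ≤ k}, u^{(k)}(x) = (2k+1)^{−d} Σ_{y ∈ Q_k(x)} u(y), and T^{(k)} = {x : Q_k(x) ⊆ T}. Then for every x ∈ T^{(k)}: Δu^{(k)}(x) ≥ k/(2k+1) − h − (n−h)·(2k+1)^{−d}·1[0 ∈ Q_k(x)]. -/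
open scoped BigOperators

/-- The cube `Q_k(x) = {y ∈ ℤ^d : max_i |x i - y i| ≤ k}` centered at `x` with
radius `k`. -/
noncomputable def Qcube {d : ℕ} (k : ℕ) (x : Fin d → ℤ) : Finset (Fin d → ℤ) :=
  Finset.Icc (fun i => x i - k) (fun i => x i + k)

/-- The discrete Laplacian `Δf(x) = (1/(2d)) ∑_{y ∼ x} f y - f x`. -/
noncomputable def lap {d : ℕ} (f : (Fin d → ℤ) → ℝ) (x : Fin d → ℤ) : ℝ :=
  (1 / (2 * (d : ℝ))) * (∑ i : Fin d, (f (nbr x i 1) + f (nbr x i (-1)))) - f x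

/-- The cube average `u^{(k)}(x) = (2k+1)^{-d} ∑_{y ∈ Q_k(x)} u y` of the emitted
mass. -/
noncomputable def SplittingModel.avgEmit {d : ℕ} {n h : ℝ}
    (M : SplittingModel d n h) (k : ℕ) (x : Fin d → ℤ) : ℝ :=
  ((2 * (k : ℝ) + 1) ^ d)⁻¹ * ∑ y ∈ Qcube k x, M.emit y


/-!
Mass is conserved in the form `η_t = η_0 + Δ E_t`, where `E_t` is the mass emitted up to time
`t`. Once every site near `Q_k(x)` is at rest, `E_t = u` there, and averaging over the cube gives
`Δu^{(k)}(x) = (2k+1)^{-d} ∑_{Q_k(x)} (η_t - η_0)`. The initial mass in the cube is explicit.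
For the final mass, a site only receives mass after its last split, and each split sends at
least `1/(2d)` to every neighbor; of two neighbors in `T`, the one splitting last therefore sends
at least `1/(2d)` to the other after the other's last split. Summing over the
`d · 2k(2k+1)^{d-1}` neighboring pairs inside the cube gives `∑_{Q_k(x)} η_t ≥ k(2k+1)^{d-1}`.
-/

section Lattice

variable {d : ℕ}

lemma nbr_apply (x : Fin d → ℤ) (i j : Fin d) (ε : ℤ) :
    nbr x i ε j = if j = i then x i + ε else x j := by
  simp [nbr, Function.update]

@[simp]
lemma nbr_nbr_neg (x : Fin d → ℤ) (i : Fin d) (ε : ℤ) : nbr (nbr x i ε) i (-ε) = x := by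
  simp [nbr]

lemma nbr_injective (i : Fin d) (ε : ℤ) : Function.Injective (nbr · i ε) :=
  Function.LeftInverse.injective (g := (nbr · i (-ε))) fun y => nbr_nbr_neg y i ε

lemma mem_Qcube {k : ℕ} {x y : Fin d → ℤ} :
    y ∈ Qcube k x ↔ ∀ i, x i - k ≤ y i ∧ y i ≤ x i + k := by
  simp [Qcube, Finset.mem_Icc, Pi.le_def, forall_and]

lemma card_Qcube (k : ℕ) (x : Fin d → ℤ) : (Qcube k x).card = (2 * k + 1) ^ d := by
  have hc : ∀ i, (Finset.Icc (x i - k) (x i + k)).card = 2 * k + 1 := fun i => by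
    rw [Int.card_Icc]; omega
  simp [Qcube, Pi.card_Icc, hc]

lemma self_mem_Qcube (k : ℕ) (x : Fin d → ℤ) : x ∈ Qcube k x :=
  mem_Qcube.2 fun i => by omega

lemma nbr_mem_Qcube_one (x : Fin d → ℤ) (i : Fin d) {ε : ℤ} (hε : |ε| ≤ 1) :
    nbr x i ε ∈ Qcube 1 x := by
  rw [abs_le] at hε
  refine mem_Qcube.2 fun j => ?_
  rw [nbr_apply]
  split_ifs with hj
  · subst hj; push_cast; omega
  · omega

lemma Qcube_subset_Qcube_add {k l : ℕ} {x y : Fin d → ℤ} (hy : y ∈ Qcube k x) :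
    Qcube l y ⊆ Qcube (k + l) x := fun z hz => by
  rw [mem_Qcube] at hy hz ⊢
  intro i
  have := hy i; have := hz i
  push_cast; omega

lemma sum_Qcube_nbr {k : ℕ} (x : Fin d → ℤ) (i : Fin d) (ε : ℤ) (f : (Fin d → ℤ) → ℝ) :
    ∑ y ∈ Qcube k (nbr x i ε), f y = ∑ y ∈ Qcube k x, f (nbr y i ε) := by
  have himage : Qcube k (nbr x i ε) = (Qcube k x).image (nbr · i ε) := by
    ext y
    simp only [Finset.mem_image, mem_Qcube, nbr_apply]
    constructor
    · intro hy
      refine ⟨nbr y i (-ε), fun j => ?_, by simpa using nbr_nbr_neg y i (-ε)⟩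
      have := hy j
      rw [nbr_apply]
      split_ifs at this ⊢ with hj <;> [subst hj; skip] <;> omega
    · rintro ⟨z, hz, rfl⟩ j
      have := hz j
      rw [nbr_apply]
      split_ifs with hj <;> [subst hj; skip] <;> omega
  rw [himage, Finset.sum_image fun a _ b _ hab => nbr_injective i ε hab]

/-- The sites of `Qcube k x` whose `+1` neighbor in direction `i` is still in the cube. -/
noncomputable def Qslab (k : ℕ) (x : Fin d → ℤ) (i : Fin d) : Finset (Fin d → ℤ) :=
  Finset.Icc (fun j => x j - k) (fun j => if j = i then x j + k - 1 else x j + k)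

lemma mem_Qslab {k : ℕ} {x y : Fin d → ℤ} {i : Fin d} :
    y ∈ Qslab k x i ↔ ∀ j, x j - k ≤ y j ∧ y j ≤ if j = i then x j + k - 1 else x j + k := by
  simp [Qslab, Finset.mem_Icc, Pi.le_def, forall_and]

lemma Qslab_subset_Qcube {k : ℕ} {x : Fin d → ℤ} {i : Fin d} : Qslab k x i ⊆ Qcube k x :=
  fun y hy => mem_Qcube.2 fun j => by
    have := mem_Qslab.1 hy j
    split_ifs at this <;> omega

lemma nbr_mem_Qcube_of_mem_Qslab {k : ℕ} {x y : Fin d → ℤ} {i : Fin d}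
    (hy : y ∈ Qslab k x i) : nbr y i 1 ∈ Qcube k x :=
  mem_Qcube.2 fun j => by
    have := mem_Qslab.1 hy j
    rw [nbr_apply]
    split_ifs at this ⊢ with hj <;> [subst hj; skip] <;> omega

lemma card_Qslab (k : ℕ) (x : Fin d → ℤ) (i : Fin d) :
    (Qslab k x i).card = 2 * k * (2 * k + 1) ^ (d - 1) := by
  have hcard : ∀ j, (Finset.Icc (x j - k) (if j = i then x j + k - 1 else x j + k)).card
      = if j = i then 2 * k else 2 * k + 1 := fun j => by
    split_ifs <;> rw [Int.card_Icc] <;> omega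
  rw [Qslab, Pi.card_Icc, Finset.prod_congr rfl fun j _ => hcard j, ←
    Finset.mul_prod_erase _ _ (Finset.mem_univ i), if_pos rfl,
    Finset.prod_congr rfl fun j hj => if_neg (Finset.ne_of_mem_erase hj)]
  simp [Finset.card_erase_of_mem]

end Lattice

section Counting

variable {d : ℕ}

lemma card_Qslab_le_sum_nbr {k : ℕ} {x : Fin d → ℤ} (i : Fin d)
    (g : (Fin d → ℤ) → (Fin d → ℤ) → ℝ) (hg : ∀ y z, 0 ≤ g y z)
    (hpair : ∀ y ∈ Qcube k x, nbr y i 1 ∈ Qcube k x → 1 ≤ g y (nbr y i 1) + g (nbr y i 1) y) :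
    ((Qslab k x i).card : ℝ) ≤ ∑ y ∈ Qcube k x, (g y (nbr y i 1) + g y (nbr y i (-1))) := by
  have hback : ∑ y ∈ Qslab k x i, g (nbr y i 1) y
      ≤ ∑ z ∈ Qcube k x, g z (nbr z i (-1)) := by
    have himage : (Qslab k x i).image (nbr · i 1) ⊆ Qcube k x := by
      simpa [Finset.image_subset_iff] using fun y hy => nbr_mem_Qcube_of_mem_Qslab hy
    calc ∑ y ∈ Qslab k x i, g (nbr y i 1) y
        = ∑ z ∈ (Qslab k x i).image (nbr · i 1), g z (nbr z i (-1)) := by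
          rw [Finset.sum_image fun a _ b _ hab => nbr_injective i 1 hab]
          simp
      _ ≤ _ := Finset.sum_le_sum_of_subset_of_nonneg himage fun _ _ _ => hg _ _
  calc ((Qslab k x i).card : ℝ)
      = ∑ _y ∈ Qslab k x i, (1 : ℝ) := by simp
    _ ≤ ∑ y ∈ Qslab k x i, (g y (nbr y i 1) + g (nbr y i 1) y) :=
      Finset.sum_le_sum fun y hy =>
        hpair y (Qslab_subset_Qcube hy) (nbr_mem_Qcube_of_mem_Qslab hy)
    _ ≤ ∑ y ∈ Qcube k x, g y (nbr y i 1) + ∑ y ∈ Qcube k x, g y (nbr y i (-1)) := by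
      rw [Finset.sum_add_distrib]
      exact add_le_add
        (Finset.sum_le_sum_of_subset_of_nonneg Qslab_subset_Qcube fun _ _ _ => hg _ _) hback
    _ = _ := Finset.sum_add_distrib.symm

/-- `2 d k (2k+1)^(d-1)` is the number of nearest-neighbor pairs inside the cube. -/
lemma le_sum_sum_nbr {k : ℕ} {x : Fin d → ℤ}
    (g : (Fin d → ℤ) → (Fin d → ℤ) → ℝ) (hg : ∀ y z, 0 ≤ g y z)
    (hpair : ∀ y ∈ Qcube k x, ∀ i, nbr y i 1 ∈ Qcube k x →
      1 ≤ g y (nbr y i 1) + g (nbr y i 1) y) :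
    2 * d * k * (2 * k + 1) ^ (d - 1)
      ≤ ∑ y ∈ Qcube k x, ∑ i, (g y (nbr y i 1) + g y (nbr y i (-1))) := by
  rw [Finset.sum_comm]
  calc (2 * d * k * (2 * k + 1) ^ (d - 1) : ℝ)
      = ∑ i : Fin d, ((Qslab k x i).card : ℝ) := by simp [card_Qslab]; ring
    _ ≤ _ := Finset.sum_le_sum fun i _ =>
      card_Qslab_le_sum_nbr i g hg fun y hy => hpair y hy i

end Counting

section Laplacian

variable {d : ℕ}

lemma lap_add (f g : (Fin d → ℤ) → ℝ) (x : Fin d → ℤ) :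
    lap (f + g) x = lap f x + lap g x := by
  simp only [lap, Pi.add_apply, Finset.sum_add_distrib]
  ring

lemma lap_congr {f g : (Fin d → ℤ) → ℝ} {x : Fin d → ℤ} (hfg : ∀ y ∈ Qcube 1 x, f y = g y) :
    lap f x = lap g x := by
  have hnbr (i : Fin d) (ε : ℤ) (hε : |ε| ≤ 1) : f (nbr x i ε) = g (nbr x i ε) :=
    hfg _ (nbr_mem_Qcube_one x i hε)
  simp only [lap, hfg x (self_mem_Qcube 1 x), hnbr _ 1 (by simp), hnbr _ (-1) (by simp)]

lemma lap_const_mul_sum_Qcube (c : ℝ) (k : ℕ) (f : (Fin d → ℤ) → ℝ) (x : Fin d → ℤ) :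
    lap (fun z => c * ∑ y ∈ Qcube k z, f y) x = c * ∑ y ∈ Qcube k x, lap f y := by
  simp only [lap, sum_Qcube_nbr, Finset.sum_sub_distrib, ← Finset.mul_sum, Finset.sum_add_distrib]
  simp only [Finset.sum_comm (s := (Finset.univ : Finset (Fin d)))]
  ring

end Laplacian

namespace SplittingModel

variable {d : ℕ} {n h : ℝ} (M : SplittingModel d n h)

/-- The mass emitted by `z` at the splitting times `s + 1, …, t`. -/
noncomputable def emitBetween (s t : ℕ) (z : Fin d → ℤ) : ℝ :=
  ∑ r ∈ Finset.Ico s t, (M.S (r + 1)).indicator (M.η r) z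

lemma indicator_eta_nonneg (t : ℕ) (z : Fin d → ℤ) : 0 ≤ (M.S (t + 1)).indicator (M.η t) z :=
  Set.indicator_nonneg (fun _ hz => zero_le_one.trans (M.S_subset t hz)) z

lemma emitBetween_nonneg (s t : ℕ) (z : Fin d → ℤ) : 0 ≤ M.emitBetween s t z :=
  Finset.sum_nonneg fun r _ => M.indicator_eta_nonneg r z

lemma one_le_emitBetween {s r t : ℕ} {z : Fin d → ℤ} (hsr : s ≤ r) (hrt : r < t)
    (hz : z ∈ M.S (r + 1)) : 1 ≤ M.emitBetween s t z :=
  calc (1 : ℝ) ≤ (M.S (r + 1)).indicator (M.η r) z := by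
        rw [Set.indicator_of_mem hz]; exact M.S_subset r hz
    _ ≤ M.emitBetween s t z :=
      Finset.single_le_sum (fun r _ => M.indicator_eta_nonneg r z) (Finset.mem_Ico.2 ⟨hsr, hrt⟩)

lemma eta_succ (t : ℕ) (y : Fin d → ℤ) :
    M.η (t + 1) y = M.η t y + lap ((M.S (t + 1)).indicator (M.η t)) y := by
  rw [M.evolve, Set.indicator_compl, lap, Pi.sub_apply]
  ring

lemma eta_eq_add_lap_emitBetween {s t : ℕ} (hst : s ≤ t) (y : Fin d → ℤ) :
    M.η t y = M.η s y + lap (M.emitBetween s t) y := by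
  induction t, hst using Nat.le_induction with
  | base => simp [emitBetween, lap]
  | succ t hst ih =>
    have hsplit : M.emitBetween s (t + 1) = M.emitBetween s t + (M.S (t + 1)).indicator (M.η t) :=
      funext fun z => Finset.sum_Ico_succ_top hst _
    rw [M.eta_succ, ih, hsplit, lap_add]
    ring

lemma emit_eq_emitBetween {N : ℕ} {z : Fin d → ℤ} (hz : ∀ r, z ∈ M.S (r + 1) → r < N) :
    M.emit z = M.emitBetween 0 N z := by
  rw [emit, emitBetween, ← Finset.range_eq_Ico]
  exact tsum_eq_sum fun r hr =>
    Set.indicator_of_notMem (fun hmem => hr (Finset.mem_range.2 (hz r hmem))) _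

/-- After its last split a site only receives mass. -/
lemma eta_eq_of_last_split {s t : ℕ} {y : Fin d → ℤ} (hy : y ∈ M.S (s + 1))
    (hlast : ∀ r, y ∈ M.S (r + 1) → r ≤ s) (hst : s < t) :
    M.η t y = 1 / (2 * (d : ℝ)) *
      ∑ i, (M.emitBetween s t (nbr y i 1) + M.emitBetween s t (nbr y i (-1))) := by
  have hself : M.emitBetween s t y = M.η s y := by
    rw [emitBetween, Finset.sum_eq_single_of_mem s (Finset.mem_Ico.2 ⟨le_rfl, hst⟩),
      Set.indicator_of_mem hy]
    exact fun r hr hrs => Set.indicator_of_notMem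
      (fun hmem => hrs (le_antisymm (hlast r hmem) (Finset.mem_Ico.1 hr).1)) _
  rw [M.eta_eq_add_lap_emitBetween hst.le, lap, hself]
  ring

lemma sum_eta_zero (A : Finset (Fin d → ℤ)) :
    ∑ y ∈ A, M.η 0 y = h * A.card + (n - h) * if (0 : Fin d → ℤ) ∈ A then 1 else 0 := by
  have hinit (y : Fin d → ℤ) : M.η 0 y = h + if y = 0 then n - h else 0 := by
    split_ifs with hy
    · rw [hy, M.init_origin]; ring
    · rw [M.init_other y hy, add_zero]
  rw [Finset.sum_congr rfl fun y _ => hinit y, Finset.sum_add_distrib, Finset.sum_ite_eq']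
  split_ifs <;> simp [mul_comm]

/-- The index `s` of the last splitting time `s + 1` of `y` (`0` if `y` never splits). -/
noncomputable def lastSplit (y : Fin d → ℤ) : ℕ :=
  sSup {r | y ∈ M.S (r + 1)}

variable {M}

lemma le_lastSplit (hstab : M.Stabilizes) {y : Fin d → ℤ} {r : ℕ} (hr : y ∈ M.S (r + 1)) :
    r ≤ M.lastSplit y :=
  le_csSup ((hstab y).preimage Nat.succ_injective.injOn).bddAbove hr

lemma mem_S_lastSplit (hstab : M.Stabilizes) {y : Fin d → ℤ} (hy : y ∈ M.T) :
    y ∈ M.S (M.lastSplit y + 1) := by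
  obtain ⟨t, ht⟩ := Set.mem_iUnion.1 hy
  obtain ⟨r, rfl⟩ : ∃ r, t = r + 1 :=
    Nat.exists_eq_succ_of_ne_zero fun ht0 => by simp [ht0, M.S_zero] at ht
  exact Nat.sSup_mem ⟨r, ht⟩ ((hstab y).preimage Nat.succ_injective.injOn).bddAbove

/-- Whichever of `y`, `z` splits last does so while the other is already at rest. -/
lemma one_le_emitBetween_lastSplit_add (hstab : M.Stabilizes) {y z : Fin d → ℤ}
    (hy : y ∈ M.T) (hz : z ∈ M.T) {N : ℕ} (hyN : M.lastSplit y < N) (hzN : M.lastSplit z < N) :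
    1 ≤ M.emitBetween (M.lastSplit y) N z + M.emitBetween (M.lastSplit z) N y := by
  rcases le_total (M.lastSplit y) (M.lastSplit z) with hle | hle
  · linarith [M.one_le_emitBetween hle hzN (mem_S_lastSplit hstab hz),
      M.emitBetween_nonneg (M.lastSplit z) N y]
  · linarith [M.one_le_emitBetween hle hyN (mem_S_lastSplit hstab hy),
      M.emitBetween_nonneg (M.lastSplit y) N z]

lemma le_sum_eta (hstab : M.Stabilizes) (hd : d ≠ 0) {k : ℕ} {x : Fin d → ℤ}
    (hx : ∀ y ∈ Qcube k x, y ∈ M.T) {N : ℕ} (hN : ∀ y ∈ Qcube k x, M.lastSplit y < N) :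
    k * (2 * k + 1) ^ (d - 1) ≤ ∑ y ∈ Qcube k x, M.η N y := by
  have hpairs := le_sum_sum_nbr (fun y z => M.emitBetween (M.lastSplit y) N z)
    (fun _ _ => M.emitBetween_nonneg _ _ _) fun y hy _ hz =>
      one_le_emitBetween_lastSplit_add hstab (hx y hy) (hx _ hz) (hN y hy) (hN _ hz)
  rw [Finset.sum_congr rfl fun y hy => M.eta_eq_of_last_split (mem_S_lastSplit hstab (hx y hy))
    (fun _ => le_lastSplit hstab) (hN y hy), ← Finset.mul_sum]
  calc (k * (2 * k + 1) ^ (d - 1) : ℝ) = 1 / (2 * d) * (2 * d * k * (2 * k + 1) ^ (d - 1)) := by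
        field_simp
    _ ≤ _ := by gcongr

lemma lap_emit (hstab : M.Stabilizes) {N : ℕ} {y : Fin d → ℤ}
    (hN : ∀ z ∈ Qcube 1 y, M.lastSplit z < N) : lap M.emit y = M.η N y - M.η 0 y := by
  rw [lap_congr fun z hz => M.emit_eq_emitBetween fun r hr =>
    (le_lastSplit hstab hr).trans_lt (hN z hz), M.eta_eq_add_lap_emitBetween (Nat.zero_le N)]
  ring

end SplittingModel

theorem avgEmit_laplacian_bound_general {d : ℕ} (hd : 1 ≤ d) {n h : ℝ}
    (M : SplittingModel d n h) (hstab : M.Stabilizes)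
    (k : ℕ) (x : Fin d → ℤ) (hx : ∀ y ∈ Qcube k x, y ∈ M.T) :
    (k : ℝ) / (2 * k + 1) - h
        - (n - h) * ((2 * (k : ℝ) + 1) ^ d)⁻¹ *
            (if (0 : Fin d → ℤ) ∈ Qcube k x then (1 : ℝ) else 0)
      ≤ lap (M.avgEmit k) x := by
  obtain ⟨N, hN⟩ : ∃ N, ∀ z ∈ Qcube (k + 1) x, M.lastSplit z < N :=
    ⟨(Qcube (k + 1) x).sup (M.lastSplit · + 1), fun _ hz =>
      Finset.le_sup (f := (M.lastSplit · + 1)) hz⟩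
  have hlap (y : Fin d → ℤ) (hy : y ∈ Qcube k x) : lap M.emit y = M.η N y - M.η 0 y :=
    M.lap_emit hstab fun z hz => hN z (Qcube_subset_Qcube_add hy hz)
  have hmass := M.le_sum_eta hstab (by omega) hx fun y hy =>
    hN y (Qcube_subset_Qcube_add hy (self_mem_Qcube 1 y))
  unfold SplittingModel.avgEmit
  rw [lap_const_mul_sum_Qcube, Finset.sum_congr rfl hlap,
    Finset.sum_sub_distrib, M.sum_eta_zero, card_Qcube]
  have hc : (0 : ℝ) < (2 * k + 1) ^ d := by positivity
  have hfrac :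
      (k : ℝ) / (2 * k + 1) = ((2 * (k : ℝ) + 1) ^ d)⁻¹ * (k * (2 * k + 1) ^ (d - 1)) := by
    rw [← Nat.sub_add_cancel hd, pow_succ, Nat.add_sub_cancel]
    field_simp
  push_cast
  rw [hfrac, mul_sub, mul_add, mul_left_comm _ h, inv_mul_cancel₀ hc.ne', mul_one]
  have := mul_le_mul_of_nonneg_left hmass (inv_pos.2 hc).le
  linarith

/-- For the splitting model on `ℤ^d` with any valid splitting order, `h < 1`,
`n ≥ 0`, assuming the model stabilizes: for `k ≥ 1` and every `x` with
`Q_k(x) ⊆ T`, one has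
`Δu^{(k)}(x) ≥ k/(2k+1) - h - (n-h)(2k+1)^{-d} 𝟙[0 ∈ Q_k(x)]`. -/
theorem avgEmit_laplacian_bound {d : ℕ} (hd : 1 ≤ d) {n h : ℝ}
    (hh : h < 1) (hn : 0 ≤ n)
    (M : SplittingModel d n h) (hM : M.Valid) (hstab : M.Stabilizes)
    (k : ℕ) (hk : 1 ≤ k) (x : Fin d → ℤ) (hx : ∀ y ∈ Qcube k x, y ∈ M.T) :
    (k : ℝ) / (2 * k + 1) - h
        - (n - h) * ((2 * (k : ℝ) + 1) ^ d)⁻¹ *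
            (if (0 : Fin d → ℤ) ∈ Qcube k x then (1 : ℝ) else 0)
      ≤ lap (M.avgEmit k) x :=
  avgEmit_laplacian_bound_general hd M hstab k x hx
end
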